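/- Let d ≥ 1 and let β ∈ ℝ with β ≥ -1/4. For every X : Matrix (Fin d × Fin d) (Fin d × Fin d) ℂ with Matrix.rank X ≤ 2, one has 0 ≤ ‖X‖_F² + β · (‖Tr₁(X)‖_F² + ‖Tr₂(X)‖_F²) + β² · ‖Tr(X)‖². (In the paper's terms: the Werner state ρ_w is 2-undistillable whenever β ≥ -1/4.) -/

import Mathlib

/-!
Write `X = ∑_{s < r} b_s c_sᵀ` with `r = rank X` and `(b_s)` an orthonormal basis of the column
space; Parseval gives `‖X‖² = ∑ ‖c_s‖²`. A partial trace of `b cᵀ` is the product of the two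
vectors reshaped into matrices, so its Frobenius norm is at most `‖b‖ ‖c‖`. The triangle and
Cauchy–Schwarz inequalities then give `‖Tr₁ X‖², ‖Tr₂ X‖² ≤ r ‖X‖²`. For `r ≤ 2` and
`-1/4 ≤ β < 0` the expression is thus at least `(1 + 4β) ‖X‖² ≥ 0`; for `β ≥ 0` every term is
nonnegative.
-/

open scoped Matrix.Norms.Frobenius InnerProductSpace

namespace Matrix

variable {𝕜 : Type*} [RCLike 𝕜]

theorem frobenius_norm_sq {m n α : Type*} [Fintype m] [Fintype n] [SeminormedAddCommGroup α]
    (A : Matrix m n α) : ‖A‖ ^ 2 = ∑ i, ∑ j, ‖A i j‖ ^ 2 := by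
  rw [frobenius_norm_def, ← Real.sqrt_eq_rpow, Real.sq_sqrt (by positivity)]
  simp only [Real.rpow_two]

theorem frobenius_norm_submatrix_equiv {m n m₀ n₀ α : Type*} [Fintype m] [Fintype n]
    [Fintype m₀] [Fintype n₀] [SeminormedAddCommGroup α]
    (A : Matrix m n α) (e : m₀ ≃ m) (f : n₀ ≃ n) : ‖A.submatrix e f‖ = ‖A‖ := by
  rw [← sq_eq_sq₀ (norm_nonneg _) (norm_nonneg _), frobenius_norm_sq, frobenius_norm_sq,
    ← e.sum_comp]
  exact Finset.sum_congr rfl fun i _ => f.sum_comp fun j => ‖A (e i) j‖ ^ 2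

theorem frobenius_norm_of_curry {ι κ : Type*} [Fintype ι] [Fintype κ]
    (a : EuclideanSpace 𝕜 (ι × κ)) : ‖of (Function.curry a)‖ = ‖a‖ := by
  rw [← sq_eq_sq₀ (norm_nonneg _) (norm_nonneg _), frobenius_norm_sq, EuclideanSpace.norm_sq_eq,
    Fintype.sum_prod_type]
  rfl

theorem exists_orthonormal_sum_vecMulVec {m n : Type*} [Fintype m] [Fintype n]
    (X : Matrix m n 𝕜) :
    ∃ (b : Fin X.rank → EuclideanSpace 𝕜 m) (c : Fin X.rank → EuclideanSpace 𝕜 n),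
      Orthonormal 𝕜 b ∧ X = ∑ s, vecMulVec (b s) (c s) ∧ ‖X‖ ^ 2 = ∑ s, ‖c s‖ ^ 2 := by
  let W : Submodule 𝕜 (EuclideanSpace 𝕜 m) :=
    (Submodule.span 𝕜 (Set.range X.col)).map (WithLp.linearEquiv 2 𝕜 (m → 𝕜)).symm.toLinearMap
  have hW : Module.finrank 𝕜 W = X.rank := by
    rw [LinearEquiv.finrank_map_eq, rank_eq_finrank_span_cols]
  let B := (stdOrthonormalBasis 𝕜 W).reindex (finCongr hW)
  let col (q : n) : W := ⟨WithLp.toLp 2 (X.col q),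
    Submodule.mem_map_of_mem (Submodule.subset_span ⟨q, rfl⟩)⟩
  refine ⟨fun s => B s, fun s => WithLp.toLp 2 fun q => ⟪B s, col q⟫_𝕜,
    B.orthonormal.comp_linearIsometry W.subtypeₗᵢ, ?_, ?_⟩
  · ext p q
    have := congrArg (fun x : W => (x : EuclideanSpace 𝕜 m) p) (B.sum_repr' (col q))
    simp only [Submodule.coe_sum, SetLike.val_smul] at this
    simpa [sum_apply, vecMulVec_apply, mul_comm, col] using this.symm
  · rw [← frobenius_norm_transpose, frobenius_norm_sq]
    simp_rw [EuclideanSpace.norm_sq_eq]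
    conv_rhs => rw [Finset.sum_comm]
    refine Finset.sum_congr rfl fun q _ => ?_
    rw [B.sum_sq_norm_inner_right, Submodule.coe_norm, EuclideanSpace.norm_sq_eq]
    rfl

section PartialTrace

variable {ι ι' κ R : Type*} [Fintype κ]

-- The paper's `Tr₂`; `partialTraceLeft` below is its `Tr₁`.
def partialTraceRight [AddCommMonoid R] (X : Matrix (ι × κ) (ι' × κ) R) : Matrix ι ι' R :=
  of fun i i' => ∑ j, X (i, j) (i', j)

def partialTraceLeft [AddCommMonoid R] (X : Matrix (κ × ι) (κ × ι') R) : Matrix ι ι' R :=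
  of fun i i' => ∑ j, X (j, i) (j, i')

theorem partialTraceLeft_eq_partialTraceRight_submatrix [AddCommMonoid R]
    (X : Matrix (κ × ι) (κ × ι') R) :
    partialTraceLeft X =
      partialTraceRight (X.submatrix (Equiv.prodComm ι κ) (Equiv.prodComm ι' κ)) :=
  rfl

theorem partialTraceRight_sum [AddCommMonoid R] {σ : Type*} [Fintype σ]
    (X : σ → Matrix (ι × κ) (ι' × κ) R) :
    partialTraceRight (∑ s, X s) = ∑ s, partialTraceRight (X s) := by
  ext i i'
  simp only [partialTraceRight, of_apply, sum_apply]
  exact Finset.sum_comm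

theorem partialTraceRight_vecMulVec [NonUnitalNonAssocSemiring R]
    (a : ι × κ → R) (c : ι' × κ → R) :
    partialTraceRight (vecMulVec a c) = of (Function.curry a) * (of (Function.curry c))ᵀ := by
  ext i i'
  simp [partialTraceRight, mul_apply, vecMulVec_apply]

variable [Fintype ι] [Fintype ι']

theorem frobenius_norm_partialTraceRight_sq_le (X : Matrix (ι × κ) (ι' × κ) 𝕜) :
    ‖partialTraceRight X‖ ^ 2 ≤ X.rank * ‖X‖ ^ 2 := by
  obtain ⟨b, c, hb, hXsum, hXnorm⟩ := exists_orthonormal_sum_vecMulVec X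
  have hle : ‖partialTraceRight X‖ ≤ ∑ s, ‖c s‖ :=
    calc ‖partialTraceRight X‖
        = ‖∑ s, of (Function.curry (b s)) * (of (Function.curry (c s)))ᵀ‖ := by
          conv_lhs => rw [hXsum, partialTraceRight_sum]
          simp only [partialTraceRight_vecMulVec]
      _ ≤ ∑ s, ‖of (Function.curry (b s))‖ * ‖(of (Function.curry (c s)))ᵀ‖ :=
          (norm_sum_le _ _).trans (Finset.sum_le_sum fun s _ => frobenius_norm_mul _ _)
      _ = ∑ s, ‖c s‖ := by
          simp only [frobenius_norm_transpose, frobenius_norm_of_curry, hb.norm_eq_one, one_mul]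
  calc ‖partialTraceRight X‖ ^ 2 ≤ (∑ s, ‖c s‖) ^ 2 := pow_le_pow_left₀ (norm_nonneg _) hle 2
    _ ≤ X.rank * ∑ s, ‖c s‖ ^ 2 := by
      simpa using sq_sum_le_card_mul_sum_sq (s := Finset.univ) (f := fun s => ‖c s‖)
    _ = X.rank * ‖X‖ ^ 2 := by rw [hXnorm]

theorem frobenius_norm_partialTraceLeft_sq_le (X : Matrix (κ × ι) (κ × ι') 𝕜) :
    ‖partialTraceLeft X‖ ^ 2 ≤ X.rank * ‖X‖ ^ 2 := by
  simpa only [partialTraceLeft_eq_partialTraceRight_submatrix, rank_submatrix,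
    frobenius_norm_submatrix_equiv] using frobenius_norm_partialTraceRight_sq_le
      (X.submatrix (Equiv.prodComm ι κ) (Equiv.prodComm ι' κ))

end PartialTrace

end Matrix

theorem werner_two_undistillable_of_beta_ge_general
    (d : ℕ) (β : ℝ) (hβ : -1 / 4 ≤ β)
    (X : Matrix (Fin d × Fin d) (Fin d × Fin d) ℂ)
    (hrank : X.rank ≤ 2) :
    0 ≤ (∑ p : Fin d × Fin d, ∑ q : Fin d × Fin d, ‖X p q‖ ^ 2)
        + β * ((∑ j : Fin d, ∑ l : Fin d, ‖∑ i : Fin d, X (i, j) (i, l)‖ ^ 2)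
              + (∑ i : Fin d, ∑ k : Fin d, ‖∑ j : Fin d, X (i, j) (k, j)‖ ^ 2))
        + β ^ 2 * ‖∑ p : Fin d × Fin d, X p p‖ ^ 2 := by
  rw [← Matrix.frobenius_norm_sq X,
    show (∑ j, ∑ l, ‖∑ i, X (i, j) (i, l)‖ ^ 2) = ‖X.partialTraceLeft‖ ^ 2 from
      (Matrix.frobenius_norm_sq _).symm,
    show (∑ i, ∑ k, ‖∑ j, X (i, j) (k, j)‖ ^ 2) = ‖X.partialTraceRight‖ ^ 2 from
      (Matrix.frobenius_norm_sq _).symm]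
  have hrank' : (X.rank : ℝ) ≤ 2 := by exact_mod_cast hrank
  have hL : ‖X.partialTraceLeft‖ ^ 2 ≤ 2 * ‖X‖ ^ 2 :=
    (X.frobenius_norm_partialTraceLeft_sq_le).trans (by gcongr)
  have hR : ‖X.partialTraceRight‖ ^ 2 ≤ 2 * ‖X‖ ^ 2 :=
    (X.frobenius_norm_partialTraceRight_sq_le).trans (by gcongr)
  have hT : 0 ≤ β ^ 2 * ‖∑ p, X p p‖ ^ 2 := by positivity
  rcases le_or_gt 0 β with hβ₀ | hβ₀
  · positivity
  · nlinarith [norm_nonneg X]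

/-- For `β ≥ -1/4` and every rank-≤2 matrix
`X : Matrix (Fin d × Fin d) (Fin d × Fin d) ℂ`,
`‖X‖_F² + β(‖Tr₁X‖_F² + ‖Tr₂X‖_F²) + β²‖Tr X‖² ≥ 0`
(the Werner state with parameter `β` is 2-undistillable). -/
theorem werner_two_undistillable_of_beta_ge
    (d : ℕ) (hd : 1 ≤ d) (β : ℝ) (hβ : -1 / 4 ≤ β)
    (X : Matrix (Fin d × Fin d) (Fin d × Fin d) ℂ)
    (hrank : X.rank ≤ 2) :
    0 ≤ (∑ p : Fin d × Fin d, ∑ q : Fin d × Fin d, ‖X p q‖ ^ 2)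
        + β * ((∑ j : Fin d, ∑ l : Fin d, ‖∑ i : Fin d, X (i, j) (i, l)‖ ^ 2)
              + (∑ i : Fin d, ∑ k : Fin d, ‖∑ j : Fin d, X (i, j) (k, j)‖ ^ 2))
        + β ^ 2 * ‖∑ p : Fin d × Fin d, X p p‖ ^ 2 :=
  werner_two_undistillable_of_beta_ge_general d β hβ X hrank
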